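/- arXiv:2503.13685 — 2 statements merged into one kernel-verified Lean document; each statement's English description precedes it below -/
import Mathlib

section
/- The map p₃* : H³(ℤ/2ℤ, ℂˣ) → H³(ℤ/4ℤ, ℂˣ) induced by the reduction homomorphism ℤ/4ℤ → ℤ/2ℤ is the zero map. -/
open scoped BigOperators

namespace GroupCohomologyUnits

/-- Inhomogeneous `n`-cochains on `G` with values in `ℂˣ` (trivial `G`-action). -/
abbrev Cochain (n : ℕ) (G : Type*) [Group G] : Type _ := (Fin n → G) → ℂˣ

/-- The inhomogeneous coboundary map for the trivial action of `G` on `ℂˣ`. -/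
def d (n : ℕ) (G : Type*) [Group G] : Cochain n G →* Cochain (n + 1) G where
  toFun c := fun g =>
    c (fun i => g i.succ) *
      ∏ j : Fin (n + 1), c (Fin.contractNth j (· * ·) g) ^ ((-1 : ℤ) ^ ((j : ℕ) + 1))
  map_one' := by
    funext g
    simp
  map_mul' c c' := by
    funext g
    simp only [Pi.mul_apply, mul_zpow, Finset.prod_mul_distrib]
    exact mul_mul_mul_comm _ _ _ _

/-- The subgroup of `n`-cocycles. -/
def cocycles (n : ℕ) (G : Type*) [Group G] : Subgroup (Cochain n G) := (d n G).ker

/-- The subgroup of `n`-coboundaries. -/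
def coboundaries (n : ℕ) (G : Type*) [Group G] : Subgroup (Cochain n G) :=
  match n with
  | 0 => ⊥
  | (m + 1) => (d m G).range

/-- `Hⁿ(G, ℂˣ)`: the `n`-th group cohomology of `G` with coefficients in the trivial
module `ℂˣ`, i.e. the quotient of the `n`-cocycles by the `n`-coboundaries. -/
abbrev H (n : ℕ) (G : Type*) [Group G] : Type _ :=
  cocycles n G ⧸ (coboundaries n G).subgroupOf (cocycles n G)

instance (n : ℕ) (G : Type*) [Group G] : CommGroup (H n G) :=
  QuotientGroup.Quotient.commGroup _

section Functoriality

variable {G Q : Type*} [Group G] [Group Q]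

/-- Precomposition of cochains with a group homomorphism. -/
def comapCochain (φ : G →* Q) (n : ℕ) : Cochain n Q →* Cochain n G where
  toFun c := fun g => c fun i => φ (g i)
  map_one' := rfl
  map_mul' _ _ := rfl

theorem contractNth_comp (φ : G →* Q) {n : ℕ} (j : Fin (n + 1)) (g : Fin (n + 1) → G) :
    Fin.contractNth j (· * ·) (fun i => φ (g i)) =
      fun k => φ (Fin.contractNth j (· * ·) g k) := by
  funext k
  unfold Fin.contractNth
  split_ifs <;> simp

theorem comapCochain_d (φ : G →* Q) (n : ℕ) (c : Cochain n Q) :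
    d n G (comapCochain φ n c) = comapCochain φ (n + 1) (d n Q c) := by
  funext g
  show (comapCochain φ n c) (fun i => g i.succ) *
      ∏ j : Fin (n + 1), (comapCochain φ n c) (Fin.contractNth j (· * ·) g)
        ^ ((-1 : ℤ) ^ ((j : ℕ) + 1)) = _
  show _ = c (fun i => φ (g i.succ)) *
      ∏ j : Fin (n + 1), c (Fin.contractNth j (· * ·) fun i => φ (g i))
        ^ ((-1 : ℤ) ^ ((j : ℕ) + 1))
  refine congrArg₂ (· * ·) rfl ?_
  refine Finset.prod_congr rfl fun j _ => ?_
  rw [contractNth_comp]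
  rfl

theorem comapCochain_mem_cocycles (φ : G →* Q) (n : ℕ) {c : Cochain n Q}
    (hc : c ∈ cocycles n Q) : comapCochain φ n c ∈ cocycles n G := by
  have hc' : d n Q c = 1 := hc
  show d n G (comapCochain φ n c) = 1
  rw [comapCochain_d, hc', map_one]

theorem comapCochain_mem_coboundaries (φ : G →* Q) (n : ℕ) {c : Cochain n Q}
    (hc : c ∈ coboundaries n Q) : comapCochain φ n c ∈ coboundaries n G := by
  cases n with
  | zero =>
    have : c = 1 := hc
    subst this
    show (1 : Cochain 0 G) ∈ (⊥ : Subgroup (Cochain 0 G))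
    exact Subgroup.one_mem _
  | succ m =>
    obtain ⟨b, hb⟩ := hc
    exact ⟨comapCochain φ m b, by rw [comapCochain_d, hb]⟩

/-- The homomorphism on cocycles induced by precomposition. -/
def comapCocycles (φ : G →* Q) (n : ℕ) : cocycles n Q →* cocycles n G :=
  ((comapCochain φ n).comp (cocycles n Q).subtype).codRestrict (cocycles n G)
    fun c => comapCochain_mem_cocycles φ n c.2

/-- `φ* : Hⁿ(Q, ℂˣ) →* Hⁿ(G, ℂˣ)`, the map on group cohomology induced by a group
homomorphism `φ : G →* Q` (inflation when `φ` is surjective). -/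
def Hmap (φ : G →* Q) (n : ℕ) : H n Q →* H n G :=
  QuotientGroup.map _ _ (comapCocycles φ n) (by
    intro c hc
    exact comapCochain_mem_coboundaries φ n hc)

end Functoriality


/-- The reduction homomorphism `ℤ/4ℤ → ℤ/2ℤ`, written multiplicatively. -/
def red42 : Multiplicative (ZMod 4) →* Multiplicative (ZMod 2) :=
  AddMonoidHom.toMultiplicative
    (ZMod.castHom (by norm_num : (2 : ℕ) ∣ 4) (ZMod 2)).toAddMonoidHom


section Main

local notation "G2" => Multiplicative (ZMod 2)
local notation "G4" => Multiplicative (ZMod 4)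

theorem dTwo_apply {G : Type*} [Group G] (b : Cochain 2 G) (g : Fin 3 → G) :
    d 2 G b g = b ![g 1, g 2] * (b ![g 0 * g 1, g 2])⁻¹ * b ![g 0, g 1 * g 2] * (b ![g 0, g 1])⁻¹ := by
  have h0 : Fin.contractNth 0 (· * ·) g = ![g 0 * g 1, g 2] := by
    funext k; fin_cases k <;> norm_num [Fin.contractNth] <;> rfl
  have h1 : Fin.contractNth 1 (· * ·) g = ![g 0, g 1 * g 2] := by
    funext k; fin_cases k <;> norm_num [Fin.contractNth] <;> rfl
  have h2 : Fin.contractNth 2 (· * ·) g = ![g 0, g 1] := by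
    funext k; fin_cases k <;> norm_num [Fin.contractNth] <;> rfl
  have hs : (fun i : Fin 2 => g i.succ) = ![g 1, g 2] := by
    funext k; fin_cases k <;> rfl
  show b (fun i => g i.succ) *
      ∏ j : Fin 3, b (Fin.contractNth j (· * ·) g) ^ ((-1 : ℤ) ^ ((j : ℕ) + 1)) = _
  rw [Fin.prod_univ_three, hs, h0, h1, h2]
  norm_num
  group

theorem dThree_apply {G : Type*} [Group G] (c : Cochain 3 G) (g : Fin 4 → G) :
    d 3 G c g = c ![g 1, g 2, g 3] * (c ![g 0 * g 1, g 2, g 3])⁻¹ * c ![g 0, g 1 * g 2, g 3] *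
      (c ![g 0, g 1, g 2 * g 3])⁻¹ * c ![g 0, g 1, g 2] := by
  have e3 : ((3 : Fin 4) : ℕ) = 3 := rfl
  have h0 : Fin.contractNth 0 (· * ·) g = ![g 0 * g 1, g 2, g 3] := by
    funext k; fin_cases k <;> norm_num [Fin.contractNth] <;> rfl
  have h1 : Fin.contractNth 1 (· * ·) g = ![g 0, g 1 * g 2, g 3] := by
    funext k; fin_cases k <;> norm_num [Fin.contractNth] <;> rfl
  have h2 : Fin.contractNth 2 (· * ·) g = ![g 0, g 1, g 2 * g 3] := by
    funext k; fin_cases k <;> norm_num [Fin.contractNth, e3] <;> rfl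
  have h3 : Fin.contractNth 3 (· * ·) g = ![g 0, g 1, g 2] := by
    funext k; fin_cases k <;> norm_num [Fin.contractNth, e3] <;> rfl
  have hs : (fun i : Fin 3 => g i.succ) = ![g 1, g 2, g 3] := by
    funext k; fin_cases k <;> rfl
  show c (fun i => g i.succ) *
      ∏ j : Fin 4, c (Fin.contractNth j (· * ·) g) ^ ((-1 : ℤ) ^ ((j : ℕ) + 1)) = _
  rw [Fin.prod_univ_four, hs, h0, h1, h2, h3]
  norm_num [e3]
  group

theorem zpow_period (δ : ℂˣ) (h : δ ^ (4 : ℤ) = 1) (a : ℤ) : δ ^ a = δ ^ (a % 4) := by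
  conv_lhs => rw [← Int.emod_add_mul_ediv a 4]
  rw [zpow_add, zpow_mul, h, one_zpow, mul_one]

/-- The 2-cochain on `ℤ/2` used to normalize a 3-cocycle. -/
def bTwo (w u : ℂˣ) : Cochain 2 G2 := fun g =>
  if g 0 = 1 then (if g 1 = 1 then 1 else w) else (if g 1 = 1 then u⁻¹ else 1)

/-- The standard 3-cocycle on `ℤ/2` with value `ε` at `(s,s,s)`. -/
def omega3 (ε : ℂˣ) : Cochain 3 G2 := fun g =>
  ε ^ ((Multiplicative.toAdd (g 0)).val * (Multiplicative.toAdd (g 1)).val *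
    (Multiplicative.toAdd (g 2)).val)

/-- The 2-cochain on `ℤ/4` trivializing the pullback of `omega3 (δ^2)`. -/
def Bfour (δ : ℂˣ) : Cochain 2 G4 := fun g =>
  δ ^ (((((Multiplicative.toAdd (g 0)).val % 2) * (Multiplicative.toAdd (g 1)).val : ℕ) : ℤ))

theorem dBfour (δ : ℂˣ) (hδ : δ ^ (4 : ℤ) = 1) :
    d 2 G4 (Bfour δ) = comapCochain red42 3 (omega3 (δ ^ 2)) := by
  funext g
  rw [dTwo_apply]
  show _ = omega3 (δ ^ 2) (fun i => red42 (g i))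
  simp only [Bfour, omega3, Matrix.cons_val_zero, Matrix.cons_val_one, Matrix.head_cons,
    toAdd_mul, red42, AddMonoidHom.toMultiplicative_apply_apply, MonoidHom.coe_coe,
    RingHom.toAddMonoidHom_eq_coe, AddMonoidHom.coe_coe, ZMod.castHom_apply, toAdd_ofAdd]
  rw [← zpow_neg, ← zpow_neg, ← zpow_add, ← zpow_add, ← zpow_add, ← pow_mul,
    ← zpow_natCast δ]
  rw [zpow_period δ hδ, zpow_period δ hδ]
  congr 1
  generalize Multiplicative.toAdd (g 0) = X
  generalize Multiplicative.toAdd (g 1) = Y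
  generalize Multiplicative.toAdd (g 2) = Z
  revert X Y Z
  decide

set_option maxHeartbeats 1000000 in
theorem comap_mem_coboundaries (c : Cochain 3 G2) (hc : d 3 G2 c = 1) :
    comapCochain red42 3 c ∈ coboundaries 3 G4 := by
  set s : G2 := Multiplicative.ofAdd 1 with hs
  have hss : s * s = 1 := by decide
  have hsne : s ≠ 1 := by decide
  set w : ℂˣ := c ![1, 1, s] with hw
  set u : ℂˣ := c ![s, 1, 1] with hu
  set v : ℂˣ := c ![s, s, s] with hv
  have rel : ∀ a b e f : G2, c ![b, e, f] * (c ![a * b, e, f])⁻¹ * c ![a, b * e, f] *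
      (c ![a, b, e * f])⁻¹ * c ![a, b, e] = 1 := by
    intro a b e f
    have h := congrFun hc ![a, b, e, f]
    rw [dThree_apply] at h
    simpa using h
  have F1 : c ![1, 1, 1] = 1 := by
    have h := rel 1 1 1 1
    simp only [one_mul, mul_one] at h
    group at h
    simpa using h
  have F2 : c ![1, s, 1] = 1 := by
    have h := rel 1 s 1 1
    simp only [one_mul, mul_one] at h
    group at h
    simpa using h
  have F3 : c ![1, s, s] = w⁻¹ := by
    have h := rel 1 1 s s
    simp only [one_mul, mul_one, hss] at h
    rw [F1] at h
    group at h
    exact eq_inv_of_mul_eq_one_left h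
  have F4 : c ![s, 1, s] = w * u := by
    have h := rel s 1 1 s
    simp only [one_mul, mul_one, hss] at h
    group at h
    rw [zpow_neg, zpow_one] at h
    rw [eq_comm, ← mul_inv_eq_one, ← h]
    simp [hw, hu, mul_comm, mul_left_comm, mul_assoc]
  have F5 : c ![s, s, 1] = u⁻¹ := by
    have h := rel s s 1 1
    simp only [one_mul, mul_one, hss] at h
    rw [F1] at h
    group at h
    exact eq_inv_of_mul_eq_one_right h
  have F6 : (v * u * w) ^ 2 = 1 := by
    have h := rel s s s s
    simp only [one_mul, mul_one, hss] at h
    rw [F3, F4, F5] at h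
    group at h
    rw [← h]
    simp [pow_two, hv, hw, hu, mul_comm, mul_left_comm, mul_assoc]
  -- square root of ε := v * u * w
  obtain ⟨z, hz⟩ := IsAlgClosed.exists_pow_nat_eq ((v * u * w : ℂˣ) : ℂ) (n := 2) zero_lt_two
  have hzne : z ≠ 0 := by
    intro h0
    rw [h0] at hz
    simpa using hz.symm
  set δ : ℂˣ := Units.mk0 z hzne with hδdef
  have hδ2 : δ ^ 2 = v * u * w := by
    ext
    push_cast [hδdef]
    exact hz
  have hδ4 : δ ^ (4 : ℤ) = 1 := by
    have : δ ^ (4 : ℤ) = (δ ^ 2) ^ 2 := by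
      norm_num
      group
    rw [this, hδ2, F6]
  have L1 : c = d 2 G2 (bTwo w u) * omega3 (δ ^ 2) := by
    funext g
    have hcase : ∀ a : G2, a = 1 ∨ a = s := by decide
    have hg : g = ![g 0, g 1, g 2] := by funext i; fin_cases i <;> rfl
    show c g = d 2 G2 (bTwo w u) g * omega3 (δ ^ 2) g
    rw [dTwo_apply, hδ2]
    conv_lhs => rw [hg]
    rcases hcase (g 0) with h0 | h0 <;> rcases hcase (g 1) with h1 | h1 <;>
      rcases hcase (g 2) with h2 | h2 <;>
      rw [h0, h1, h2] <;>
      simp [bTwo, omega3, hss, h0, h1, h2, hsne, F1, F2, F3, F4, F5,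
        show (Multiplicative.toAdd s).val = 1 from rfl, ← hv] <;>
      simp [mul_comm, mul_left_comm, mul_assoc, F3, F5, hv, hw, hu]
  refine ⟨comapCochain red42 2 (bTwo w u) * Bfour δ, ?_⟩
  rw [map_mul, comapCochain_d, dBfour δ hδ4, ← map_mul, ← L1]

end Main

/-- the map `p₃* : H³(ℤ/2ℤ, ℂˣ) → H³(ℤ/4ℤ, ℂˣ)` induced by the reduction
homomorphism `ℤ/4ℤ → ℤ/2ℤ` is the zero map. -/
theorem inflation_three_zmod2_to_zmod4_trivial (x : H 3 (Multiplicative (ZMod 2))) :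
    Hmap red42 3 x = 1 := by
  induction x using QuotientGroup.induction_on with
  | H y =>
    rw [show Hmap red42 3 (QuotientGroup.mk y) =
      QuotientGroup.mk (comapCocycles red42 3 y) from rfl]
    rw [QuotientGroup.eq_one_iff]
    rw [Subgroup.mem_subgroupOf]
    exact comap_mem_coboundaries y.1 y.2


end GroupCohomologyUnits
end

section
/- Let p and q be positive integers and set n = pq. The cokernel of the map p₃* : H³(ℤ/qℤ, ℂˣ) → H³(ℤ/nℤ, ℂˣ) induced by the reduction homomorphism ℤ/nℤ → ℤ/qℤ is a cyclic group of order p·gcd(p,q). -/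
open scoped BigOperators

namespace GroupCohomologyUnits

/-- The reduction homomorphism `ℤ/pqℤ → ℤ/qℤ`, written multiplicatively. -/
def redPQ (p q : ℕ) : Multiplicative (ZMod (p * q)) →* Multiplicative (ZMod q) :=
  AddMonoidHom.toMultiplicative
    (ZMod.castHom (dvd_mul_left q p) (ZMod q)).toAddMonoidHom

/-!
Write `g` for the generator `1` of `ℤ/mℤ` and set `tr f = ∏_y f(g, y, g)` for a 3-cochain `f`.
Reindexing the product shows that `tr` kills coboundaries, and for a cocycle `f` the cocycle
identity at `(x, y, z, g)`, multiplied over `z`, shows that `x ↦ ∏_z f(x, z, g)` is a character;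
hence `(tr f)ᵐ = 1`. Multiplying the cocycle identity at `(x, y, gᵏ, g)` over `k < z` exhibits `f`
as cohomologous to `(x, y, z) ↦ (tr f) ^ (x ⌊(y + z) / m⌋)`, and this cocycle has trace `tr f`.
So `tr` identifies `H³(ℤ/mℤ, ℂˣ)` with the cyclic group `μ_m`.

Under these identifications inflation along `ℤ/pqℤ → ℤ/qℤ` becomes `ζ ↦ ζᵖ` on `μ_q`, because a
product over `pq` consecutive powers of `g` runs `p` times through `ℤ/qℤ`. Its kernel therefore
has order `gcd(p, q)`, its image order `q / gcd(p, q)`, and the cokernel, a quotient of `μ_pq`, is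
cyclic of order `pq / (q / gcd(p, q)) = p gcd(p, q)`.
-/

section Formulas

variable {G : Type*} [Group G]

theorem d_two_apply (b : Cochain 2 G) (x y z : G) :
    d 2 G b ![x, y, z] = b ![y, z] * b ![x, y * z] / (b ![x * y, z] * b ![x, y]) := by
  have hs : (fun i : Fin 2 => ![x, y, z] i.succ) = ![y, z] := by ext i; fin_cases i <;> rfl
  have h0 : Fin.contractNth 0 (· * ·) ![x, y, z] = ![x * y, z] := by ext i; fin_cases i <;> rfl
  have h1 : Fin.contractNth 1 (· * ·) ![x, y, z] = ![x, y * z] := by ext i; fin_cases i <;> rfl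
  have h2 : Fin.contractNth 2 (· * ·) ![x, y, z] = ![x, y] := by ext i; fin_cases i <;> rfl
  show b _ * ∏ j : Fin 3, _ = _
  rw [Fin.prod_univ_three]
  simp only [hs, h0, h1, h2]
  norm_num
  rw [div_eq_mul_inv, mul_inv]
  ac_rfl

theorem d_three_apply (f : Cochain 3 G) (x y z w : G) :
    d 3 G f ![x, y, z, w] =
      f ![y, z, w] * f ![x, y * z, w] * f ![x, y, z] / (f ![x * y, z, w] * f ![x, y, z * w]) := by
  have hs : (fun i : Fin 3 => ![x, y, z, w] i.succ) = ![y, z, w] := by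
    ext i; fin_cases i <;> rfl
  have h0 : Fin.contractNth 0 (· * ·) ![x, y, z, w] = ![x * y, z, w] := by
    ext i; fin_cases i <;> rfl
  have h1 : Fin.contractNth 1 (· * ·) ![x, y, z, w] = ![x, y * z, w] := by
    ext i; fin_cases i <;> rfl
  have h2 : Fin.contractNth 2 (· * ·) ![x, y, z, w] = ![x, y, z * w] := by
    ext i; fin_cases i <;> rfl
  have h3 : Fin.contractNth 3 (· * ·) ![x, y, z, w] = ![x, y, z] := by
    ext i; fin_cases i <;> rfl
  show f _ * ∏ j : Fin 4, _ = _
  rw [Fin.prod_univ_four]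
  simp only [hs, h0, h1, h2, h3]
  norm_num
  rw [div_eq_mul_inv, mul_inv]
  ac_rfl

theorem mem_cocycles_three_iff {f : Cochain 3 G} :
    f ∈ cocycles 3 G ↔ ∀ x y z w : G,
      f ![y, z, w] * f ![x, y * z, w] * f ![x, y, z] = f ![x * y, z, w] * f ![x, y, z * w] := by
  refine ⟨fun h x y z w => ?_, fun h => funext fun g => ?_⟩
  · have hxyzw := congrFun (h : d 3 G f = 1) ![x, y, z, w]
    rwa [d_three_apply, Pi.one_apply, div_eq_one] at hxyzw
  · have hg : g = ![g 0, g 1, g 2, g 3] := by ext i; fin_cases i <;> rfl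
    rw [hg, d_three_apply, Pi.one_apply, div_eq_one]
    exact h _ _ _ _

end Formulas

section Cyclic

variable {m : ℕ}

variable (m) in
def gen : Multiplicative (ZMod m) := .ofAdd 1

theorem gen_pow (k : ℕ) : gen m ^ k = .ofAdd (k : ZMod m) := by
  rw [gen, ← ofAdd_nsmul, nsmul_one]

theorem gen_pow_self : gen m ^ m = 1 := by
  rw [gen_pow, ZMod.natCast_self, ofAdd_zero]

def carry (y z : Multiplicative (ZMod m)) : ℕ := (y.toAdd.val + z.toAdd.val) / m

def stdCocycle (ζ : ℂˣ) : Cochain 3 (Multiplicative (ZMod m)) :=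
  fun g => ζ ^ ((g 0).toAdd.val * carry (g 1) (g 2))

theorem stdCocycle_apply (ζ : ℂˣ) (x y z : Multiplicative (ZMod m)) :
    stdCocycle ζ ![x, y, z] = ζ ^ (x.toAdd.val * carry y z) := rfl

theorem stdCocycle_one : stdCocycle (m := m) 1 = 1 := by
  funext g
  exact one_pow _

def partialRowProd (f : Cochain 3 (Multiplicative (ZMod m))) (x : Multiplicative (ZMod m))
    (c : ℕ) : ℂˣ :=
  ∏ k ∈ Finset.range c, f ![x, gen m ^ k, gen m]

@[simp]
theorem partialRowProd_zero (f : Cochain 3 (Multiplicative (ZMod m)))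
    (x : Multiplicative (ZMod m)) : partialRowProd f x 0 = 1 :=
  Finset.prod_range_zero _

variable [NeZero m]

theorem gen_pow_val (x : Multiplicative (ZMod m)) : gen m ^ x.toAdd.val = x := by
  rw [gen_pow, ZMod.natCast_zmod_val, ofAdd_toAdd]

theorem val_add_val (y z : Multiplicative (ZMod m)) :
    y.toAdd.val + z.toAdd.val = (y * z).toAdd.val + m * carry y z := by
  rw [toAdd_mul, ZMod.val_add, carry, Nat.mod_add_div]

theorem carry_mul_add_carry (y z w : Multiplicative (ZMod m)) :
    carry (y * z) w + carry y z = carry y (z * w) + carry z w := by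
  have hyz := val_add_val y z
  have hyzw := val_add_val (y * z) w
  have hzw := val_add_val z w
  have hyzw' := val_add_val y (z * w)
  rw [mul_assoc] at hyzw
  refine Nat.eq_of_mul_eq_mul_left (Nat.pos_of_neZero m) ?_
  linarith

theorem stdCocycle_mem_cocycles {ζ : ℂˣ} (hζ : ζ ^ m = 1) :
    stdCocycle ζ ∈ cocycles 3 (Multiplicative (ZMod m)) := by
  refine mem_cocycles_three_iff.mpr fun x y z w => ?_
  simp only [stdCocycle_apply, ← pow_add]
  have hexp : y.toAdd.val * carry z w + x.toAdd.val * carry (y * z) w +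
        x.toAdd.val * carry y z =
      (x * y).toAdd.val * carry z w + x.toAdd.val * carry y (z * w) +
        m * (carry x y * carry z w) := by
    have hxy := val_add_val x y
    have hc := carry_mul_add_carry y z w
    linear_combination (x.toAdd.val : ℕ) * hc + carry z w * hxy
  rw [hexp, pow_add, pow_mul, hζ, one_pow, mul_one]

theorem prod_range_gen_pow {M : Type*} [CommMonoid M] (h : Multiplicative (ZMod m) → M) :
    ∏ k ∈ Finset.range m, h (gen m ^ k) = ∏ y, h y := by
  refine Finset.prod_nbij' (gen m ^ ·) (fun y => y.toAdd.val) (by simp) ?_ ?_ ?_ (by simp)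
  · intro y _
    simpa using ZMod.val_lt y.toAdd
  · intro k hk
    rw [gen_pow, toAdd_ofAdd, ZMod.val_cast_of_lt (Finset.mem_range.mp hk)]
  · intro y _
    exact gen_pow_val y

def rowProd (f : Cochain 3 (Multiplicative (ZMod m))) (x : Multiplicative (ZMod m)) : ℂˣ :=
  ∏ y, f ![x, y, gen m]

theorem partialRowProd_add_mul (f : Cochain 3 (Multiplicative (ZMod m)))
    (x : Multiplicative (ZMod m)) (n e : ℕ) :
    partialRowProd f x (n + m * e) = partialRowProd f x n * rowProd f x ^ e := by
  induction e with
  | zero => simp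
  | succ e ih =>
    have hshift : ∏ k ∈ Finset.range m, f ![x, gen m ^ (n + m * e + k), gen m] = rowProd f x := by
      simp only [pow_add _ (n + m * e)]
      rw [prod_range_gen_pow (fun y => f ![x, gen m ^ (n + m * e) * y, gen m]), rowProd]
      exact Equiv.prod_comp (Equiv.mulLeft (gen m ^ (n + m * e))) fun y => f ![x, y, gen m]
    rw [partialRowProd, mul_add_one, ← add_assoc, Finset.prod_range_add, ← partialRowProd, ih,
      hshift, pow_succ, mul_assoc]

variable (m) in
def trace : Cochain 3 (Multiplicative (ZMod m)) →* ℂˣ where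
  toFun f := rowProd f (gen m)
  map_one' := Finset.prod_const_one
  map_mul' _ _ := Finset.prod_mul_distrib

theorem trace_apply (f : Cochain 3 (Multiplicative (ZMod m))) :
    trace m f = rowProd f (gen m) := rfl

theorem trace_eq_one_of_mem_coboundaries {f : Cochain 3 (Multiplicative (ZMod m))}
    (hf : f ∈ coboundaries 3 (Multiplicative (ZMod m))) : trace m f = 1 := by
  obtain ⟨b, rfl⟩ := hf
  have hleft : ∏ y, b ![gen m * y, gen m] = ∏ y, b ![y, gen m] :=
    Equiv.prod_comp (Equiv.mulLeft (gen m)) fun y => b ![y, gen m]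
  have hright : ∏ y, b ![gen m, y * gen m] = ∏ y, b ![gen m, y] :=
    Equiv.prod_comp (Equiv.mulRight (gen m)) fun y => b ![gen m, y]
  simp only [trace_apply, rowProd, d_two_apply, Finset.prod_div_distrib, Finset.prod_mul_distrib,
    hleft, hright, div_self']

theorem rowProd_mul {f : Cochain 3 (Multiplicative (ZMod m))}
    (hf : f ∈ cocycles 3 (Multiplicative (ZMod m))) (x y : Multiplicative (ZMod m)) :
    rowProd f (x * y) = rowProd f x * rowProd f y := by
  have hsum := Finset.prod_congr rfl fun z (_ : z ∈ Finset.univ) =>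
    mem_cocycles_three_iff.mp hf x y z (gen m)
  have hleft : ∏ z, f ![x, y * z, gen m] = rowProd f x :=
    Equiv.prod_comp (Equiv.mulLeft y) fun z => f ![x, z, gen m]
  have hright : ∏ z, f ![x, y, z * gen m] = ∏ z, f ![x, y, z] :=
    Equiv.prod_comp (Equiv.mulRight (gen m)) fun z => f ![x, y, z]
  simp only [Finset.prod_mul_distrib, hleft, hright] at hsum
  change rowProd f y * rowProd f x * _ = rowProd f (x * y) * _ at hsum
  rw [mul_comm (rowProd f x)]
  exact (mul_right_cancel hsum).symm

def rowProdHom {f : Cochain 3 (Multiplicative (ZMod m))}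
    (hf : f ∈ cocycles 3 (Multiplicative (ZMod m))) : Multiplicative (ZMod m) →* ℂˣ :=
  MonoidHom.mk' (rowProd f) (rowProd_mul hf)

theorem rowProd_eq_trace_pow {f : Cochain 3 (Multiplicative (ZMod m))}
    (hf : f ∈ cocycles 3 (Multiplicative (ZMod m))) (x : Multiplicative (ZMod m)) :
    rowProd f x = trace m f ^ x.toAdd.val := by
  calc rowProd f x = rowProdHom hf (gen m ^ x.toAdd.val) := by rw [gen_pow_val]; rfl
    _ = trace m f ^ x.toAdd.val := map_pow _ _ _

theorem trace_pow_self {f : Cochain 3 (Multiplicative (ZMod m))}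
    (hf : f ∈ cocycles 3 (Multiplicative (ZMod m))) : trace m f ^ m = 1 := by
  calc trace m f ^ m = rowProdHom hf (gen m ^ m) := (map_pow (rowProdHom hf) (gen m) m).symm
    _ = 1 := by rw [gen_pow_self, map_one]

theorem trace_stdCocycle {ζ : ℂˣ} (hζ : ζ ^ m = 1) : trace m (stdCocycle ζ) = ζ := by
  obtain ⟨n, rfl⟩ := Nat.exists_eq_add_one_of_ne_zero (NeZero.ne m)
  have hval (k : ℕ) (hk : k < n + 1) : (gen (n + 1) ^ k).toAdd.val = k := by
    rw [gen_pow, toAdd_ofAdd, ZMod.val_cast_of_lt hk]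
  have hgen : (gen (n + 1)).toAdd.val = 1 % (n + 1) := ZMod.val_one_eq_one_mod _
  have hcarry (k : ℕ) (hk : k < n) : carry (gen (n + 1) ^ k) (gen (n + 1)) = 0 := by
    rw [carry, hval k (by omega), hgen]
    exact Nat.div_eq_of_lt (by have := Nat.mod_le 1 (n + 1); omega)
  rw [trace_apply, rowProd, ← prod_range_gen_pow, Finset.prod_range_succ,
    Finset.prod_eq_one fun k hk => ?_, one_mul]
  · rw [stdCocycle_apply, carry, hval n (by omega), hgen]
    rcases n with _ | n
    · simpa using hζ.symm
    · simp
  · rw [stdCocycle_apply, hcarry k (Finset.mem_range.mp hk), mul_zero, pow_zero]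

theorem cocycle_mul_partialRowProd {f : Cochain 3 (Multiplicative (ZMod m))}
    (hf : f ∈ cocycles 3 (Multiplicative (ZMod m))) (x y : Multiplicative (ZMod m)) (c : ℕ) :
    f ![x, y, gen m ^ c] * partialRowProd f x y.toAdd.val * partialRowProd f (x * y) c =
      f ![x, y, 1] * partialRowProd f y c * partialRowProd f x (y.toAdd.val + c) := by
  induction c with
  | zero => simp
  | succ c ih =>
    have hcoc := mem_cocycles_three_iff.mp hf x y (gen m ^ c) (gen m)
    rw [← pow_succ, ← gen_pow_val y, ← pow_add, gen_pow_val y] at hcoc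
    simp only [partialRowProd, ← add_assoc, Finset.prod_range_succ] at ih ⊢
    calc _ = (f ![x * y, gen m ^ c, gen m] * f ![x, y, gen m ^ (c + 1)]) *
          ((∏ k ∈ Finset.range y.toAdd.val, f ![x, gen m ^ k, gen m]) *
            ∏ k ∈ Finset.range c, f ![x * y, gen m ^ k, gen m]) := by ac_rfl
      _ = _ := by rw [← hcoc, mul_assoc, ← mul_assoc (f ![x, y, gen m ^ c]), ih]; ac_rfl

theorem exists_eq_d_mul_stdCocycle {f : Cochain 3 (Multiplicative (ZMod m))}
    (hf : f ∈ cocycles 3 (Multiplicative (ZMod m))) :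
    ∃ b : Cochain 2 (Multiplicative (ZMod m)), f = d 2 _ b * stdCocycle (trace m f) := by
  refine ⟨fun g => partialRowProd f (g 0) (g 1).toAdd.val / f ![g 0, 1, 1], funext fun g => ?_⟩
  obtain ⟨x, y, z, rfl⟩ : ∃ x y z, g = ![x, y, z] := ⟨g 0, g 1, g 2, by ext i; fin_cases i <;> rfl⟩
  have hkey := cocycle_mul_partialRowProd hf x y z.toAdd.val
  rw [gen_pow_val, val_add_val, partialRowProd_add_mul, rowProd_eq_trace_pow hf, ← pow_mul] at hkey
  have hnorm : f ![y, 1, 1] * f ![x, y, 1] = f ![x * y, 1, 1] := by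
    have h := mem_cocycles_three_iff.mp hf x y 1 1
    simp only [mul_one] at h
    exact mul_right_cancel h
  rw [Pi.mul_apply, d_two_apply, stdCocycle_apply]
  simp only [Matrix.cons_val_zero, Matrix.cons_val_one]
  apply Units.ext
  have hkey' := congrArg Units.val hkey
  have hnorm' := congrArg Units.val hnorm
  push_cast at hkey' hnorm' ⊢
  field_simp
  linear_combination (f ![y, 1, 1] : ℂ) * hkey' + (partialRowProd f y z.toAdd.val *
    partialRowProd f x (y * z).toAdd.val * trace m f ^ (x.toAdd.val * carry y z) : ℂ) * hnorm'

variable (m) in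
def traceH : H 3 (Multiplicative (ZMod m)) →* ℂˣ :=
  QuotientGroup.lift _ ((trace m).comp (cocycles 3 _).subtype) fun _ hc =>
    trace_eq_one_of_mem_coboundaries (Subgroup.mem_subgroupOf.mp hc)

theorem traceH_mk (c : cocycles 3 (Multiplicative (ZMod m))) :
    traceH m (QuotientGroup.mk c) = trace m c := rfl

theorem traceH_injective : Function.Injective (traceH m) := by
  refine (injective_iff_map_eq_one _).mpr fun x hx => ?_
  obtain ⟨c, rfl⟩ := QuotientGroup.mk_surjective x
  obtain ⟨b, hb⟩ := exists_eq_d_mul_stdCocycle c.2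
  rw [traceH_mk] at hx
  rw [hx, stdCocycle_one, mul_one] at hb
  exact (QuotientGroup.eq_one_iff c).mpr (Subgroup.mem_subgroupOf.mpr ⟨b, hb.symm⟩)

theorem range_traceH : (traceH m).range = rootsOfUnity m ℂ := by
  ext ζ
  refine ⟨?_, fun hζ => ?_⟩
  · rintro ⟨x, rfl⟩
    obtain ⟨c, rfl⟩ := QuotientGroup.mk_surjective x
    exact (mem_rootsOfUnity _ _).mpr (trace_pow_self c.2)
  · have hζ' : ζ ^ m = 1 := (mem_rootsOfUnity _ _).mp hζ
    exact ⟨QuotientGroup.mk ⟨_, stdCocycle_mem_cocycles hζ'⟩, trace_stdCocycle hζ'⟩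

variable (m) in
noncomputable def H3MulEquivRootsOfUnity : H 3 (Multiplicative (ZMod m)) ≃* rootsOfUnity m ℂ :=
  (MonoidHom.ofInjective traceH_injective).trans (MulEquiv.subgroupCongr range_traceH)

instance : IsCyclic (H 3 (Multiplicative (ZMod m))) :=
  isCyclic_of_surjective _ (H3MulEquivRootsOfUnity m).symm.surjective

theorem card_H3 : Nat.card (H 3 (Multiplicative (ZMod m))) = m := by
  rw [Nat.card_congr (H3MulEquivRootsOfUnity m).toEquiv, Complex.card_rootsOfUnity]

instance : Finite (H 3 (Multiplicative (ZMod m))) :=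
  Nat.finite_of_card_ne_zero (card_H3.trans_ne (NeZero.ne m))

end Cyclic

section Reduction

variable {p q : ℕ}

theorem redPQ_gen : redPQ p q (gen (p * q)) = gen q :=
  congrArg Multiplicative.ofAdd (map_one (ZMod.castHom (dvd_mul_left q p) (ZMod q)))

variable [NeZero q] [NeZero (p * q)]

theorem trace_comapCochain_redPQ (c : Cochain 3 (Multiplicative (ZMod q))) :
    trace (p * q) (comapCochain (redPQ p q) 3 c) = trace q c ^ p := by
  have hvec (k : ℕ) : (fun i => redPQ p q (![gen (p * q), gen (p * q) ^ k, gen (p * q)] i)) =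
      ![gen q, gen q ^ k, gen q] := by
    ext i; fin_cases i <;> simp [redPQ_gen]
  calc trace (p * q) (comapCochain (redPQ p q) 3 c)
        = ∏ k ∈ Finset.range (p * q), c ![gen q, gen q ^ k, gen q] := by
          rw [trace_apply, rowProd, ← prod_range_gen_pow]
          exact Finset.prod_congr rfl fun k _ => congrArg c (hvec k)
    _ = partialRowProd c (gen q) (0 + q * p) := by rw [zero_add, mul_comm]; rfl
    _ = trace q c ^ p := by rw [partialRowProd_add_mul, partialRowProd_zero, one_mul, trace_apply]

theorem traceH_Hmap_redPQ (x : H 3 (Multiplicative (ZMod q))) :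
    traceH (p * q) (Hmap (redPQ p q) 3 x) = traceH q x ^ p := by
  obtain ⟨c, rfl⟩ := QuotientGroup.mk_surjective x
  exact trace_comapCochain_redPQ c.1

theorem ker_Hmap_redPQ :
    (Hmap (redPQ p q) 3).ker = (powMonoidHom p : H 3 (Multiplicative (ZMod q)) →* _).ker := by
  ext x
  rw [MonoidHom.mem_ker, MonoidHom.mem_ker, powMonoidHom_apply,
    ← map_eq_one_iff _ traceH_injective, traceH_Hmap_redPQ, ← map_pow,
    map_eq_one_iff _ traceH_injective]

end Reduction

/-- for positive integers `p, q` and `n = p * q`, the cokernel of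
`p₃* : H³(ℤ/qℤ, ℂˣ) → H³(ℤ/nℤ, ℂˣ)` induced by the reduction `ℤ/nℤ → ℤ/qℤ`
is a cyclic group of order `p * gcd p q`. -/
theorem cokernel_inflation_three_zmod (p q : ℕ) (hp : 0 < p) (hq : 0 < q) :
    IsCyclic (H 3 (Multiplicative (ZMod (p * q))) ⧸ (Hmap (redPQ p q) 3).range) ∧
      Nat.card (H 3 (Multiplicative (ZMod (p * q))) ⧸ (Hmap (redPQ p q) 3).range) =
        p * Nat.gcd p q := by
  have : NeZero q := ⟨hq.ne'⟩
  have : NeZero (p * q) := ⟨(Nat.mul_pos hp hq).ne'⟩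
  set R := (Hmap (redPQ p q) 3).range
  have hR : Nat.card R = q / q.gcd p := by
    rw [← Subgroup.index_ker, ker_Hmap_redPQ, IsCyclic.index_powMonoidHom_ker, card_H3]
  refine ⟨isCyclic_of_surjective _ (QuotientGroup.mk'_surjective R), ?_⟩
  have hcard := Subgroup.card_eq_card_quotient_mul_card_subgroup R
  rw [card_H3, hR] at hcard
  have hq' : 0 < q / q.gcd p := Nat.div_pos (Nat.gcd_le_left p hq) (Nat.gcd_pos_of_pos_left p hq)
  refine Nat.eq_of_mul_eq_mul_right hq' ?_
  rw [← hcard, Nat.gcd_comm, mul_assoc, Nat.mul_div_cancel' (Nat.gcd_dvd_left q p)]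

end GroupCohomologyUnits
end
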